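/- Suppose (f,g) ∈ H¹(ℝ)² minimizes τ(f,g) = -a∫(f')² - c∫(g')² + ∫f²g + 2∫fg subject to ‖f‖₂² + ‖g‖₂² = μ, and satisfies the Euler–Lagrange system af'' + fg + g = λf, cg'' + (1/2)f² + f = λg for some λ ∈ ℝ. Then λμ = τ(f,g) + (1/2)∫f²g, and hence -λμ ≥ -m(μ). -/

import Mathlib

open MeasureTheory Real

/-!
Multiply the first Euler–Lagrange equation by `f`, the second by `g`, and integrate: after
integrating `f f''` and `g g''` by parts, the two identities express `λ‖f‖₂²` and `λ‖g‖₂²`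
through the terms of `τ`, and their sum is `λμ = τ(f,g) + ½∫f²g`.
Since `g ≤ 0`, `∫f²g ≤ 0`, so `λμ ≤ τ(f,g)`.
-/

theorem MeasureTheory.Integrable.mul_of_sq {α : Type*} [MeasurableSpace α]
    {μ : Measure α} {f g : α → ℝ} (hf2 : Integrable (fun x => f x ^ 2) μ)
    (hg2 : Integrable (fun x => g x ^ 2) μ)
    (hf : AEStronglyMeasurable f μ) (hg : AEStronglyMeasurable g μ) :
    Integrable (fun x => f x * g x) μ :=
  ((memLp_two_iff_integrable_sq hf).2 hf2).integrable_mul ((memLp_two_iff_integrable_sq hg).2 hg2)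

theorem integral_mul_deriv_deriv_eq_neg_integral_sq {u u' u'' : ℝ → ℝ}
    (hu : ∀ x, HasDerivAt u (u' x) x) (hu' : ∀ x, HasDerivAt u' (u'' x) x)
    (hu2 : Integrable (fun x => u x ^ 2)) (hu'2 : Integrable (fun x => u' x ^ 2))
    (huu'' : Integrable (fun x => u x * u'' x)) :
    ∫ x, u x * u'' x = -∫ x, u' x ^ 2 := by
  have hcu : Continuous u := continuous_iff_continuousAt.2 fun x => (hu x).continuousAt
  have hcu' : Continuous u' := continuous_iff_continuousAt.2 fun x => (hu' x).continuousAt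
  have huu' := hu2.mul_of_sq hu'2 hcu.aestronglyMeasurable hcu'.aestronglyMeasurable
  simp only [sq] at hu'2 ⊢
  exact integral_mul_deriv_eq_deriv_mul_of_integrable (fun x _ => hu x) (fun x _ => hu' x) huu''
    hu'2 huu'

noncomputable def tau (a c : ℝ) (f g f' g' : ℝ → ℝ) : ℝ :=
  -a * (∫ x, f' x ^ 2) - c * (∫ x, g' x ^ 2) + (∫ x, f x ^ 2 * g x) + 2 * ∫ x, f x * g x

theorem lam_mul_mass_eq_tau_add {a c lam : ℝ} {f g f' g' f'' g'' : ℝ → ℝ}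
    (hf : ∀ x, HasDerivAt f (f' x) x) (hg : ∀ x, HasDerivAt g (g' x) x)
    (hf' : ∀ x, HasDerivAt f' (f'' x) x) (hg' : ∀ x, HasDerivAt g' (g'' x) x)
    (hf2 : Integrable (fun x => f x ^ 2)) (hf'2 : Integrable (fun x => f' x ^ 2))
    (hg2 : Integrable (fun x => g x ^ 2)) (hg'2 : Integrable (fun x => g' x ^ 2))
    (hf2g : Integrable (fun x => f x ^ 2 * g x))
    (hfg : Integrable (fun x => f x * g x))
    (hff'' : Integrable (fun x => f x * f'' x)) (hgg'' : Integrable (fun x => g x * g'' x))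
    (hEL1 : ∀ x, a * f'' x + f x * g x + g x = lam * f x)
    (hEL2 : ∀ x, c * g'' x + (1 / 2) * f x ^ 2 + f x = lam * g x) :
    lam * ((∫ x, f x ^ 2) + ∫ x, g x ^ 2) =
      tau a c f g f' g' + (1 / 2) * ∫ x, f x ^ 2 * g x := by
  have tested_f : a * (∫ x, f x * f'' x) + (∫ x, f x ^ 2 * g x) + (∫ x, f x * g x)
      = lam * ∫ x, f x ^ 2 := by
    have h : ∫ x, (a * (f x * f'' x) + f x ^ 2 * g x + f x * g x) = ∫ x, lam * f x ^ 2 := by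
      congr 1 with x
      linear_combination f x * hEL1 x
    rwa [integral_add ((hff''.const_mul a).fun_add hf2g) hfg,
      integral_add (hff''.const_mul a) hf2g,
      integral_const_mul, integral_const_mul] at h
  have tested_g : c * (∫ x, g x * g'' x) + (1 / 2) * (∫ x, f x ^ 2 * g x) + (∫ x, f x * g x)
      = lam * ∫ x, g x ^ 2 := by
    have h : ∫ x, (c * (g x * g'' x) + (1 / 2) * (f x ^ 2 * g x) + f x * g x)
        = ∫ x, lam * g x ^ 2 := by
      congr 1 with x
      linear_combination g x * hEL2 x
    rwa [integral_add ((hgg''.const_mul c).fun_add (hf2g.const_mul _)) hfg,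
      integral_add (hgg''.const_mul c) (hf2g.const_mul _),
      integral_const_mul, integral_const_mul, integral_const_mul] at h
  rw [integral_mul_deriv_deriv_eq_neg_integral_sq hf hf' hf2 hf'2 hff''] at tested_f
  rw [integral_mul_deriv_deriv_eq_neg_integral_sq hg hg' hg2 hg'2 hgg''] at tested_g
  rw [tau]
  linarith

theorem stmt11_general (a c μ lam : ℝ)
    (f g f' g' f'' g'' : ℝ → ℝ)
    (hf : ∀ x, HasDerivAt f (f' x) x) (hg : ∀ x, HasDerivAt g (g' x) x)
    (hf' : ∀ x, HasDerivAt f' (f'' x) x) (hg' : ∀ x, HasDerivAt g' (g'' x) x)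
    (hgneg : ∀ x, g x ≤ 0)
    (hif2 : Integrable (fun x => (f x) ^ 2))
    (hif'2 : Integrable (fun x => (f' x) ^ 2))
    (hig2 : Integrable (fun x => (g x) ^ 2))
    (hig'2 : Integrable (fun x => (g' x) ^ 2))
    (hif2g : Integrable (fun x => (f x) ^ 2 * g x))
    (hifg : Integrable (fun x => f x * g x))
    (hiff'' : Integrable (fun x => f x * f'' x))
    (higg'' : Integrable (fun x => g x * g'' x))
    (hconstraint : (∫ x, (f x) ^ 2) + (∫ x, (g x) ^ 2) = μ)
    (hEL1 : ∀ x, a * f'' x + f x * g x + g x = lam * f x)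
    (hEL2 : ∀ x, c * g'' x + (1 / 2) * (f x) ^ 2 + f x = lam * g x) :
    lam * μ =
      (-a * (∫ x, (f' x) ^ 2) - c * (∫ x, (g' x) ^ 2)
        + (∫ x, (f x) ^ 2 * g x) + 2 * (∫ x, f x * g x))
        + (1 / 2) * (∫ x, (f x) ^ 2 * g x) ∧
    -(lam * μ) ≥
      -(-a * (∫ x, (f' x) ^ 2) - c * (∫ x, (g' x) ^ 2)
        + (∫ x, (f x) ^ 2 * g x) + 2 * (∫ x, f x * g x)) := by
  have identity : lam * μ = tau a c f g f' g' + (1 / 2) * ∫ x, f x ^ 2 * g x :=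
    hconstraint ▸ lam_mul_mass_eq_tau_add hf hg hf' hg' hif2 hif'2 hig2 hig'2 hif2g hifg hiff''
      higg'' hEL1 hEL2
  have cubic_nonpos : ∫ x, f x ^ 2 * g x ≤ 0 :=
    integral_nonpos fun x => mul_nonpos_of_nonneg_of_nonpos (sq_nonneg _) (hgneg x)
  rw [tau] at identity
  exact ⟨identity, by linarith⟩

/-- If `(f,g)` minimizes `τ` on `X_μ` and satisfies the Euler–Lagrange system
`af'' + fg + g = λf`, `cg'' + (1/2)f² + f = λg`, then
`λμ = τ(f,g) + (1/2)∫f²g`, and hence `-λμ ≥ -m(μ)` (where `m(μ) = τ(f,g)`). -/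
theorem stmt11 (a c μ lam : ℝ) (ha : a < 0) (hc : c < 0) (hμ : 0 < μ)
    (f g f' g' f'' g'' : ℝ → ℝ)
    (hf : ∀ x, HasDerivAt f (f' x) x) (hg : ∀ x, HasDerivAt g (g' x) x)
    (hf' : ∀ x, HasDerivAt f' (f'' x) x) (hg' : ∀ x, HasDerivAt g' (g'' x) x)
    (hfpos : ∀ x, 0 ≤ f x) (hgneg : ∀ x, g x ≤ 0)
    (hif2 : Integrable (fun x => (f x) ^ 2))
    (hif'2 : Integrable (fun x => (f' x) ^ 2))
    (hig2 : Integrable (fun x => (g x) ^ 2))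
    (hig'2 : Integrable (fun x => (g' x) ^ 2))
    (hif2g : Integrable (fun x => (f x) ^ 2 * g x))
    (hifg : Integrable (fun x => f x * g x))
    (hiff'' : Integrable (fun x => f x * f'' x))
    (higg'' : Integrable (fun x => g x * g'' x))
    (hconstraint : (∫ x, (f x) ^ 2) + (∫ x, (g x) ^ 2) = μ)
    (hEL1 : ∀ x, a * f'' x + f x * g x + g x = lam * f x)
    (hEL2 : ∀ x, c * g'' x + (1 / 2) * (f x) ^ 2 + f x = lam * g x) :
    lam * μ =
      (-a * (∫ x, (f' x) ^ 2) - c * (∫ x, (g' x) ^ 2)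
        + (∫ x, (f x) ^ 2 * g x) + 2 * (∫ x, f x * g x))
        + (1 / 2) * (∫ x, (f x) ^ 2 * g x) ∧
    -(lam * μ) ≥
      -(-a * (∫ x, (f' x) ^ 2) - c * (∫ x, (g' x) ^ 2)
        + (∫ x, (f x) ^ 2 * g x) + 2 * (∫ x, f x * g x)) :=
  stmt11_general a c μ lam f g f' g' f'' g'' hf hg hf' hg' hgneg hif2 hif'2 hig2 hig'2 hif2g hifg
    hiff'' higg'' hconstraint hEL1 hEL2
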